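/- arXiv:2410.16766 — 4 statements merged into one kernel-verified Lean document; each statement's English description precedes it below -/
import Mathlib

section
/- Let X be a topological space and Y a compact metric space. Let e : X → X → ℝ be a function such that e x x = 0 for every x ∈ X and such that, for every x ∈ X, the function y ↦ e x y is continuous at x. Then the set F = {f ∈ C(X,Y) | f is e-decreasing} has compact closure in C(X,Y) equipped with the compact-open topology. -/
/-- The set of `e`-decreasing continuous maps into a compact metric space has
compact closure in `C(X, Y)` with the compact-open topology. -/
theorem stmt_1 {X Y : Type*} [TopologicalSpace X] [MetricSpace Y] [CompactSpace Y]
    (e : X → X → ℝ) (he0 : ∀ x, e x x = 0) (hec : ∀ x, ContinuousAt (e x) x) :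
    IsCompact (closure {f : C(X, Y) | ∀ a b, dist (f a) (f b) ≤ e a b}) := by
  set F : Set C(X, Y) := {f | ∀ a b, dist (f a) (f b) ≤ e a b} with hF
  -- Auxiliary: eventually e x y < ε near x
  have hsmall : ∀ (x : X) (ε : ℝ), 0 < ε → ∀ᶠ y in nhds x, e x y < ε := by
    intro x ε hε
    have := (hec x).eventually (eventually_lt_nhds (by rw [he0 x]; exact hε))
    exact this
  -- Equicontinuity of F
  have heq : Equicontinuous ((↑) : F → X → Y) := by
    intro x
    rw [Metric.equicontinuousAt_iff_right]
    intro ε hε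
    filter_upwards [hsmall x ε hε] with y hy ⟨f, hf⟩
    exact lt_of_le_of_lt (hf x y) hy
  -- The pointwise image of F is the closed set D
  have himg : (fun f : C(X, Y) => (f : X → Y)) '' F =
      {g : X → Y | ∀ a b, dist (g a) (g b) ≤ e a b} := by
    ext g
    constructor
    · rintro ⟨f, hf, rfl⟩; exact hf
    · intro hg
      have hcont : Continuous g := by
        rw [continuous_iff_continuousAt]
        intro x
        rw [Metric.continuousAt_iff']
        intro ε hε
        filter_upwards [hsmall x ε hε] with y hy
        calc dist (g y) (g x) = dist (g x) (g y) := dist_comm _ _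
          _ ≤ e x y := hg x y
          _ < ε := hy
      exact ⟨⟨g, hcont⟩, hg, rfl⟩
  have hDclosed : IsClosed {g : X → Y | ∀ a b, dist (g a) (g b) ≤ e a b} := by
    have : {g : X → Y | ∀ a b, dist (g a) (g b) ≤ e a b} =
        ⋂ (a) (b), {g : X → Y | dist (g a) (g b) ≤ e a b} := by
      ext g; simp [Set.mem_iInter]
    rw [this]
    refine isClosed_iInter fun a => isClosed_iInter fun b => ?_
    exact isClosed_le (Continuous.dist (continuous_apply a) (continuous_apply b))
      continuous_const
  have hFcompact : IsCompact F := by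
    apply ArzelaAscoli.isCompact_of_equicontinuous
    · rw [show (ContinuousMap.toFun '' F) = (fun f : C(X, Y) => (f : X → Y)) '' F from rfl, himg]
      exact hDclosed.isCompact
    · exact heq
  rw [hFcompact.isClosed.closure_eq]
  exact hFcompact
end

section
/- Let X be a topological space and Y a compact metric space. Let e : X → X → ℝ be a function such that e x x = 0 for every x ∈ X and such that, for every x ∈ X, the function y ↦ e x y is continuous at x. Then the set {f ∈ C(X,Y) | f is e-decreasing} is a compact subset of C(X,Y) equipped with the compact-open topology. -/
/-- The set of `e`-decreasing continuous maps into a compact metric space is a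
compact subset of `C(X, Y)` with the compact-open topology. -/
theorem stmt_3 {X Y : Type*} [TopologicalSpace X] [MetricSpace Y] [CompactSpace Y]
    (e : X → X → ℝ) (he0 : ∀ x, e x x = 0) (hec : ∀ x, ContinuousAt (e x) x) :
    IsCompact {f : C(X, Y) | ∀ a b, dist (f a) (f b) ≤ e a b} := by
  set S : Set C(X, Y) := {f : C(X, Y) | ∀ a b, dist (f a) (f b) ≤ e a b}
  have key : ∀ (g : X → Y), (∀ a b, dist (g a) (g b) ≤ e a b) → Continuous g := by
    intro g hg
    rw [continuous_iff_continuousAt]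
    intro x
    rw [Metric.continuousAt_iff']
    intro ε hε
    have h : ∀ᶠ y in nhds x, e x y < ε := by
      have := (hec x).eventually (Filter.Tendsto.eventually_lt_const (by rw [he0 x]; exact hε)
        (Filter.tendsto_id (α := ℝ)))
      simpa using this
    filter_upwards [h] with y hy
    exact lt_of_le_of_lt (by simpa [dist_comm] using hg x y) hy
  have heq : Equicontinuous ((↑) : S → X → Y) := by
    intro x
    rw [Metric.equicontinuousAt_iff_right]
    intro ε hε
    have h : ∀ᶠ y in nhds x, e x y < ε := by
      have := (hec x).eventually (Filter.Tendsto.eventually_lt_const (by rw [he0 x]; exact hε)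
        (Filter.tendsto_id (α := ℝ)))
      simpa using this
    filter_upwards [h] with y hy f
    exact lt_of_le_of_lt (by simpa [dist_comm] using f.2 x y) hy
  apply ArzelaAscoli.isCompact_of_equicontinuous S _ heq
  have himg : ContinuousMap.toFun '' S = {g : X → Y | ∀ a b, dist (g a) (g b) ≤ e a b} := by
    ext g
    constructor
    · rintro ⟨f, hf, rfl⟩; exact hf
    · intro hg; exact ⟨⟨g, key g hg⟩, hg, rfl⟩
  rw [himg]
  have hclosed : IsClosed {g : X → Y | ∀ a b, dist (g a) (g b) ≤ e a b} := by
    have : {g : X → Y | ∀ a b, dist (g a) (g b) ≤ e a b} =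
        ⋂ a, ⋂ b, {g : X → Y | dist (g a) (g b) ≤ e a b} := by
      ext g; simp [Set.mem_iInter]
    rw [this]
    exact isClosed_iInter fun a => isClosed_iInter fun b =>
      isClosed_le (Continuous.dist (continuous_apply a) (continuous_apply b)) continuous_const
  exact hclosed.isCompact
end

section
/- Let X be a compact topological space and Y a compact metric space. Let e : X → X → ℝ be a function such that e x x = 0 for every x ∈ X and such that, for every x ∈ X, the function y ↦ e x y is continuous at x. Then the set {f ∈ C(X,Y) | f is surjective and f is e-decreasing} is a compact subset of C(X,Y) equipped with the compact-open topology. -/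
/-- For `X` compact and `Y` a compact metric space, the set of surjective
`e`-decreasing continuous maps is compact in `C(X, Y)`. -/
theorem stmt_5 {X Y : Type*} [TopologicalSpace X] [CompactSpace X]
    [MetricSpace Y] [CompactSpace Y]
    (e : X → X → ℝ) (he0 : ∀ x, e x x = 0) (hec : ∀ x, ContinuousAt (e x) x) :
    IsCompact {f : C(X, Y) | Function.Surjective f ∧ ∀ a b, dist (f a) (f b) ≤ e a b} := by
  set K : Set C(X, Y) := {f | ∀ a b, dist (f a) (f b) ≤ e a b} with hKdef
  -- equicontinuity of K
  have heq : Equicontinuous ((↑) : K → X → Y) := by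
    intro x
    rw [Metric.equicontinuousAt_iff_right]
    intro ε hε
    have h0 := hec x
    rw [ContinuousAt, he0 x] at h0
    have h1 : ∀ᶠ b in nhds x, e x b < ε := h0.eventually_lt_const hε
    filter_upwards [h1] with b hb f
    exact lt_of_le_of_lt (f.2 x b) hb
  -- K is compact by Arzelà–Ascoli
  have hKim : ContinuousMap.toFun '' K
      = {g : X → Y | ∀ a b, dist (g a) (g b) ≤ e a b} := by
    ext g
    constructor
    · rintro ⟨f, hf, rfl⟩; exact hf
    · intro hg
      have hcont : Continuous g := by
        rw [continuous_iff_continuousAt]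
        intro x
        rw [ContinuousAt, tendsto_iff_dist_tendsto_zero]
        have h0 := hec x
        rw [ContinuousAt, he0 x] at h0
        exact squeeze_zero (fun b => dist_nonneg)
          (fun b => by rw [dist_comm]; exact hg x b) h0
      exact ⟨⟨g, hcont⟩, hg, rfl⟩
  have hKimc : IsCompact (ContinuousMap.toFun '' K) := by
    rw [hKim]
    apply IsCompact.of_isClosed_subset (isCompact_univ_pi fun _ => isCompact_univ)
    · have : {g : X → Y | ∀ a b, dist (g a) (g b) ≤ e a b}
          = ⋂ a, ⋂ b, {g : X → Y | dist (g a) (g b) ≤ e a b} := by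
        ext g; simp
      rw [this]
      exact isClosed_iInter fun a => isClosed_iInter fun b =>
        isClosed_le (((continuous_apply a).dist (continuous_apply b))) continuous_const
    · intro g _; simp
  have hK : IsCompact K := ArzelaAscoli.isCompact_of_equicontinuous K hKimc heq
  -- surjective maps form a closed set
  cases isEmpty_or_nonempty X with
  | inl h =>
    have : Subsingleton C(X, Y) := ⟨fun f g => ContinuousMap.ext fun x => h.elim x⟩
    exact (Set.toFinite _).isCompact
  | inr h => ?_
  have hT : IsClosed {f : C(X, Y) | Function.Surjective f} := by
    rw [← isOpen_compl_iff]
    rw [Metric.isOpen_iff]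
    intro f hf
    simp only [Set.mem_compl_iff, Set.mem_setOf_eq, Function.Surjective, not_forall] at hf
    obtain ⟨y, hy⟩ := hf
    have hcl : IsClosed (Set.range f) := (isCompact_range f.continuous).isClosed
    have hne : (Set.range f).Nonempty := Set.range_nonempty _
    have hpos : 0 < Metric.infDist y (Set.range f) :=
      (hcl.notMem_iff_infDist_pos hne).mp (by simpa using hy)
    refine ⟨_, hpos, fun g hg => ?_⟩
    simp only [Set.mem_compl_iff, Set.mem_setOf_eq, Function.Surjective, not_forall]
    refine ⟨y, ?_⟩
    rintro ⟨x, hx⟩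
    have h1 : dist y (f x) ≤ dist g f := by
      rw [← hx]; exact ContinuousMap.dist_apply_le_dist x
    have h2 : Metric.infDist y (Set.range f) ≤ dist y (f x) :=
      Metric.infDist_le_dist_of_mem ⟨x, rfl⟩
    rw [Metric.mem_ball] at hg
    linarith
  have : {f : C(X, Y) | Function.Surjective f ∧ ∀ a b, dist (f a) (f b) ≤ e a b}
      = {f : C(X, Y) | Function.Surjective f} ∩ K := rfl
  rw [this]
  exact hK.inter_left hT
end

section
/- Let R be a commutative ring and N, k natural numbers. Let φ : Fin N → R[X_1,…,X_N] and h : Fin N → Fin k → R[X_1,…,X_N] be families of multivariate polynomials in N variables, and let n : Fin N → Fin k → ℕ satisfy n s i ≥ 1 for all s, i. Define F : Fin N → R[X_1,…,X_N] by F s = φ s · ∏_{i} (h s i)^(n s i). Then the product ∏_{s} ∏_{i} (h s i)^(n s i − 1) divides the Jacobian determinant det( (∂F_s/∂X_r)_{s,r} ) of the family F. -/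
open MvPolynomial

lemma aux_prod_dvd_pderiv {R : Type*} [CommRing R] {σ : Type*} {k : ℕ}
    (r : σ) (h : Fin k → MvPolynomial σ R) (n : Fin k → ℕ) (t : Finset (Fin k)) :
    (∏ i ∈ t, h i ^ (n i - 1)) ∣ pderiv r (∏ i ∈ t, h i ^ (n i)) := by
  classical
  induction t using Finset.induction_on with
  | empty => simp
  | @insert a t ha ih =>
    rw [Finset.prod_insert ha, Finset.prod_insert ha, pderiv_mul]
    apply dvd_add
    · apply mul_dvd_mul
      · rw [Derivation.leibniz_pow]
        simp [nsmul_eq_mul, smul_eq_mul, mul_assoc]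
        exact ⟨(n a : MvPolynomial σ R) * pderiv r (h a), by ring⟩
      · exact Finset.prod_dvd_prod_of_dvd _ _ fun i _ =>
          pow_dvd_pow _ (Nat.sub_le _ _)
    · exact mul_dvd_mul (pow_dvd_pow _ (Nat.sub_le _ _)) ih

/-- Factorization of the Jacobian determinant: if `F s = φ s * ∏ i, (h s i) ^ (n s i)`,
then `∏ s, ∏ i, (h s i) ^ (n s i - 1)` divides `det (∂F_s/∂X_r)`. -/
theorem stmt_7 {R : Type*} [CommRing R] (N k : ℕ)
    (φ : Fin N → MvPolynomial (Fin N) R)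
    (h : Fin N → Fin k → MvPolynomial (Fin N) R)
    (n : Fin N → Fin k → ℕ) (hn : ∀ s i, 1 ≤ n s i)
    (F : Fin N → MvPolynomial (Fin N) R)
    (hF : ∀ s, F s = φ s * ∏ i, h s i ^ (n s i)) :
    (∏ s, ∏ i, h s i ^ (n s i - 1)) ∣
      Matrix.det (Matrix.of fun s r : Fin N => pderiv r (F s)) := by
  classical
  set g : Fin N → MvPolynomial (Fin N) R := fun s => ∏ i, h s i ^ (n s i - 1) with hg
  have hdvd : ∀ s r : Fin N, g s ∣ pderiv r (F s) := by
    intro s r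
    rw [hF s, pderiv_mul]
    apply dvd_add
    · exact Dvd.dvd.mul_left
        (Finset.prod_dvd_prod_of_dvd _ _ fun i _ => pow_dvd_pow _ (Nat.sub_le _ _)) _
    · exact Dvd.dvd.mul_left (aux_prod_dvd_pderiv r (h s) (n s) Finset.univ) _
  choose E hE using hdvd
  have : Matrix.det (Matrix.of fun s r : Fin N => pderiv r (F s))
      = Matrix.det (Matrix.of fun s r : Fin N => g s * E s r) :=
    congrArg Matrix.det (Matrix.ext fun s r => hE s r)
  rw [this, show (Matrix.of fun s r : Fin N => g s * E s r).det = (∏ i, g i) * Matrix.det (Matrix.of E) from Matrix.det_mul_column g E]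
  exact Dvd.intro _ rfl
end
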